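/- arXiv:1812.06039 — 4 statements merged into one kernel-verified Lean document; each statement's English description precedes it below -/
import Mathlib

section
/- Let σ_ρ be a {1,2}-valued random variable with P(σ_ρ=1)=π₁ ∈ (0,1), π₂ = 1 - π₁, and let X₁ = P(σ_ρ = 1 | 𝒢) for a σ-algebra 𝒢. Define x = E[X₁ | σ_ρ=1] - π₁ and z = E[(X₁ - π₁)² | σ_ρ = 1]. Then x = E[(X₁-π₁)² | σ_ρ=1] + (π₂/π₁)·E[((1-X₁) - π₂)² | σ_ρ=2], and in particular 0 ≤ z ≤ x. -/
/-! Write `π = P(A)` and `Y = E[1_A | 𝒢]`. Since `Y` is `𝒢`-measurable, the tower property gives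
`E[Y; A] = E[Y 1_A] = E[Y E[1_A | 𝒢]] = E[Y²]`, and `E[Y] = π`, so
`E[(Y - π)²] = E[Y²] - π² = E[Y; A] - π²`. Splitting `E[(Y - π)²]` over `A` and its complement
`B = {σ_ρ = 2}`, where `(1 - Y) - (1 - π) = π - Y`, yields the decomposition of `x`;
both pieces are nonnegative, which gives `0 ≤ z ≤ x`. -/

open MeasureTheory ProbabilityTheory

section

variable {Ω : Type*} {𝒢 m : MeasurableSpace Ω} {μ : Measure Ω}

lemma integral_condExp_mul_eq_integral_condExp_sq [IsFiniteMeasure μ] (h𝒢 : 𝒢 ≤ m)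
    {f : Ω → ℝ} (hf : Integrable f μ) {C : ℝ} (hC : ∀ᵐ ω ∂μ, ‖μ[f|𝒢] ω‖ ≤ C) :
    ∫ ω, μ[f|𝒢] ω * f ω ∂μ = ∫ ω, μ[f|𝒢] ω ^ 2 ∂μ :=
  calc ∫ ω, μ[f|𝒢] ω * f ω ∂μ = ∫ ω, μ[μ[f|𝒢] * f|𝒢] ω ∂μ := (integral_condExp h𝒢).symm
    _ = ∫ ω, (μ[f|𝒢] * μ[f|𝒢]) ω ∂μ := integral_congr_ae
          (condExp_stronglyMeasurable_mul_of_bound h𝒢 stronglyMeasurable_condExp hf C hC)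
    _ = ∫ ω, μ[f|𝒢] ω ^ 2 ∂μ := by simp only [Pi.mul_apply, sq]

lemma ae_norm_condExp_indicator_one_le (A : Set Ω) :
    ∀ᵐ ω ∂μ, ‖μ[A.indicator (fun _ => (1 : ℝ))|𝒢] ω‖ ≤ 1 := by
  have hbdd : ∀ᵐ ω ∂μ, |A.indicator (fun _ => (1 : ℝ)) ω| ≤ 1 :=
    .of_forall fun ω => by by_cases hω : ω ∈ A <;> simp [hω]
  simpa only [Real.norm_eq_abs] using ae_bdd_abs_condExp_of_ae_bdd_abs hbdd

lemma setIntegral_condExp_indicator_one_eq_integral_sq [IsFiniteMeasure μ] (h𝒢 : 𝒢 ≤ m)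
    {A : Set Ω} (hA : MeasurableSet A) :
    ∫ ω in A, μ[A.indicator (fun _ => (1 : ℝ))|𝒢] ω ∂μ =
      ∫ ω, μ[A.indicator (fun _ => (1 : ℝ))|𝒢] ω ^ 2 ∂μ := by
  rw [← integral_indicator hA, ← integral_condExp_mul_eq_integral_condExp_sq h𝒢
    ((integrable_const 1).indicator hA) (ae_norm_condExp_indicator_one_le A)]
  congr 1 with ω
  by_cases hω : ω ∈ A <;> simp [hω]

lemma memLp_of_ae_eq_condExp_indicator_one [IsFiniteMeasure μ] {p : ENNReal} (hp : 1 ≤ p)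
    {A : Set Ω} (hA : MeasurableSet A) {X : Ω → ℝ}
    (hX : X =ᵐ[μ] μ[A.indicator (fun _ => (1 : ℝ))|𝒢]) : MemLp X p μ :=
  ((memLp_indicator_const p hA 1 (.inr (measure_ne_top μ A))).condExp hp).ae_eq hX.symm

lemma integral_sub_measureReal_sq_of_ae_eq_condExp [IsProbabilityMeasure μ] (h𝒢 : 𝒢 ≤ m)
    {A : Set Ω} (hA : MeasurableSet A) {X : Ω → ℝ}
    (hX : X =ᵐ[μ] μ[A.indicator (fun _ => (1 : ℝ))|𝒢]) :
    ∫ ω, (X ω - μ.real A) ^ 2 ∂μ = ∫ ω in A, X ω ∂μ - μ.real A ^ 2 := by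
  have hL2 : MemLp X 2 μ := memLp_of_ae_eq_condExp_indicator_one one_le_two hA hX
  have hmean : ∫ ω, X ω ∂μ = μ.real A := by
    rw [integral_congr_ae hX, integral_condExp h𝒢, ← integral_indicator_one hA]
    rfl
  have hsq : ∫ ω in A, X ω ∂μ = ∫ ω, X ω ^ 2 ∂μ := by
    rw [setIntegral_congr_ae hA (hX.mono fun ω h _ => h),
      setIntegral_condExp_indicator_one_eq_integral_sq h𝒢 hA]
    exact integral_congr_ae (hX.mono fun ω h => by simp only [h])
  calc ∫ ω, (X ω - μ.real A) ^ 2 ∂μ = Var[X; μ] := by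
        rw [variance_eq_integral hL2.aemeasurable, hmean]
    _ = ∫ ω in A, X ω ∂μ - μ.real A ^ 2 := by
        rw [variance_eq_sub hL2, hsq, hmean]
        rfl

end

theorem posterior_variance_decomposition_general
    {Ω : Type*} [m : MeasurableSpace Ω] (μ : Measure Ω) [IsProbabilityMeasure μ]
    (σρ : Ω → ℕ) (hσ : Measurable σρ) (hvals : ∀ ω, σρ ω = 1 ∨ σρ ω = 2)
    (A B : Set Ω) (hA : A = {ω | σρ ω = 1}) (hB : B = {ω | σρ ω = 2})
    (π₁ π₂ : ℝ) (hπ₁ : π₁ ∈ Set.Ioo (0:ℝ) 1) (hπ₂ : π₂ = 1 - π₁)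
    (hμA : (μ A).toReal = π₁)
    (𝒢 : MeasurableSpace Ω) (h𝒢 : 𝒢 ≤ m)
    (X₁ : Ω → ℝ)
    (hX : X₁ =ᵐ[μ] μ[A.indicator (fun _ => (1:ℝ)) | 𝒢])
    (x z : ℝ)
    (hx : x = (∫ ω in A, X₁ ω ∂μ) / π₁ - π₁)
    (hz : z = (∫ ω in A, (X₁ ω - π₁)^2 ∂μ) / π₁) :
    x = (∫ ω in A, (X₁ ω - π₁)^2 ∂μ) / π₁ +
        (π₂ / π₁) * ((∫ ω in B, ((1 - X₁ ω) - π₂)^2 ∂μ) / π₂) ∧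
    0 ≤ z ∧ z ≤ x := by
  have hπ₁pos : 0 < π₁ := hπ₁.1
  have hπ₂pos : 0 < π₂ := by linarith [hπ₁.2]
  have hAm : MeasurableSet[m] A := hA ▸ hσ (measurableSet_singleton 1)
  have hBm : MeasurableSet[m] B := hB ▸ hσ (measurableSet_singleton 2)
  have hBA : B = Aᶜ := by
    ext ω
    rcases hvals ω with h | h <;> simp [hA, hB, h]
  have hvar : ∫ ω, (X₁ ω - π₁) ^ 2 ∂μ = ∫ ω in A, X₁ ω ∂μ - π₁ ^ 2 := by
    rw [← hμA]
    exact integral_sub_measureReal_sq_of_ae_eq_condExp h𝒢 hAm hX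
  have hsplit : ∫ ω in A, (X₁ ω - π₁) ^ 2 ∂μ + ∫ ω in B, ((1 - X₁ ω) - π₂) ^ 2 ∂μ =
      ∫ ω, (X₁ ω - π₁) ^ 2 ∂μ := by
    have hint : Integrable (fun ω => (X₁ ω - π₁) ^ 2) μ :=
      ((memLp_of_ae_eq_condExp_indicator_one one_le_two hAm hX).sub
        (memLp_const π₁)).integrable_sq
    rw [← integral_add_compl hAm hint, hBA, hπ₂]
    congr 2 with ω
    ring
  have hK : 0 ≤ ∫ ω in A, (X₁ ω - π₁) ^ 2 ∂μ := setIntegral_nonneg hAm fun ω _ => sq_nonneg _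
  have hL : 0 ≤ ∫ ω in B, ((1 - X₁ ω) - π₂) ^ 2 ∂μ := setIntegral_nonneg hBm fun ω _ => sq_nonneg _
  subst hx hz
  refine ⟨?_, div_nonneg hK hπ₁pos.le, ?_⟩
  · field_simp
    linarith
  · rw [div_sub' hπ₁pos.ne', ← sq]
    gcongr
    linarith

theorem posterior_variance_decomposition
    {Ω : Type*} [m : MeasurableSpace Ω] (μ : Measure Ω) [IsProbabilityMeasure μ]
    (σρ : Ω → ℕ) (hσ : Measurable σρ) (hvals : ∀ ω, σρ ω = 1 ∨ σρ ω = 2)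
    (A B : Set Ω) (hA : A = {ω | σρ ω = 1}) (hB : B = {ω | σρ ω = 2})
    (π₁ π₂ : ℝ) (hπ₁ : π₁ ∈ Set.Ioo (0:ℝ) 1) (hπ₂ : π₂ = 1 - π₁)
    (hμA : (μ A).toReal = π₁)
    (𝒢 : MeasurableSpace Ω) (h𝒢 : 𝒢 ≤ m)
    (X₁ : Ω → ℝ) (hrange : ∀ ω, X₁ ω ∈ Set.Icc (0:ℝ) 1)
    (hX : X₁ =ᵐ[μ] μ[A.indicator (fun _ => (1:ℝ)) | 𝒢])
    (x z : ℝ)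
    (hx : x = (∫ ω in A, X₁ ω ∂μ) / π₁ - π₁)
    (hz : z = (∫ ω in A, (X₁ ω - π₁)^2 ∂μ) / π₁) :
    x = (∫ ω in A, (X₁ ω - π₁)^2 ∂μ) / π₁ +
        (π₂ / π₁) * ((∫ ω in B, ((1 - X₁ ω) - π₂)^2 ∂μ) / π₂) ∧
    0 ≤ z ∧ z ≤ x :=
  posterior_variance_decomposition_general (m := m) μ σρ hσ hvals A B hA hB π₁ π₂ hπ₁ hπ₂ hμA 𝒢 h𝒢
    X₁ hX x z hx hz
end

section
/- Let a > 0 and for s > 0 let W_s ~ N(−as/2, as). Define g(s) = E[ 1/(1 + λ e^{W_s}) ] for a constant λ > 0. Then for 0 < s' ≤ s, g(s) ≥ g(s'). That is, g is nondecreasing on (0,∞). -/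
/-!
Split `N(-as/2, as)` as the convolution of `N(-as'/2, as')` with `ν = N(-a(s-s')/2, a(s-s'))`.
Since `∫ exp dν = 1`, Jensen's inequality for the convex map `t ↦ 1/(1+t)` gives
`f x ≤ ∫ f (x + y) dν(y)` for `f w = 1/(1 + l e^w)`; integrating against the first factor
yields `g s' ≤ g s`.
-/

open MeasureTheory ProbabilityTheory Real Set
open scoped NNReal

lemma convexOn_one_div_one_add : ConvexOn ℝ (Ici 0) fun x : ℝ => 1 / (1 + x) := by
  have h := (convexOn_zpow (𝕜 := ℝ) (-1)).translate_right 1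
  refine (h.subset (fun x hx => ?_) (convex_Ici 0)).congr fun x _ => ?_
  · simp only [mem_preimage, mem_Ioi, mem_Ici] at hx ⊢; linarith
  · simp

lemma integrable_one_div_one_add_mul_exp {μ : Measure ℝ} [IsFiniteMeasure μ] {c : ℝ}
    (hc : 0 ≤ c) : Integrable (fun y => 1 / (1 + c * exp y)) μ := by
  refine Integrable.of_bound (by measurability) 1 (ae_of_all _ fun y => ?_)
  have : 1 ≤ 1 + c * exp y := le_add_of_nonneg_right (by positivity)
  rw [norm_of_nonneg (by positivity)]
  exact div_le_one_of_le₀ this (by positivity)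

namespace MeasureTheory.Measure

variable {G E : Type*} [AddMonoid G] [MeasurableSpace G] [MeasurableAdd₂ G]
  [NormedAddCommGroup E] {μ ν : Measure G}

lemma integrable_prod_add_of_integrable_conv {f : G → E} (hf : Integrable f (μ ∗ ν)) :
    Integrable (fun z : G × G => f (z.1 + z.2)) (μ.prod ν) :=
  (integrable_map_measure hf.aestronglyMeasurable (by fun_prop)).mp hf

lemma integral_conv [NormedSpace ℝ E] [SFinite μ] [SFinite ν] {f : G → E}
    (hf : Integrable f (μ ∗ ν)) :
    ∫ z, f z ∂(μ ∗ ν) = ∫ x, ∫ y, f (x + y) ∂ν ∂μ := by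
  rw [conv, integral_map (by fun_prop) hf.aestronglyMeasurable,
    integral_prod _ (integrable_prod_add_of_integrable_conv hf)]

lemma integral_le_integral_conv [SFinite μ] [SFinite ν] {f : G → ℝ} (hfμ : Integrable f μ)
    (hf : Integrable f (μ ∗ ν)) (hsub : ∀ x, f x ≤ ∫ y, f (x + y) ∂ν) :
    ∫ x, f x ∂μ ≤ ∫ z, f z ∂(μ ∗ ν) := by
  rw [integral_conv hf]
  exact integral_mono hfμ (integrable_prod_add_of_integrable_conv hf).integral_prod_left hsub

end MeasureTheory.Measure

lemma integral_exp_gaussianReal (m : ℝ) (v : ℝ≥0) :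
    ∫ x, exp x ∂(gaussianReal m v) = exp (m + v / 2) := by
  simpa [mgf] using congrFun (mgf_id_gaussianReal (μ := m) (v := v)) 1

lemma one_div_one_add_le_integral_one_div_one_add_mul_exp {ν : Measure ℝ}
    [IsProbabilityMeasure ν]
    (hint : Integrable exp ν) (hmean : ∫ y, exp y ∂ν = 1) {c : ℝ} (hc : 0 ≤ c) :
    1 / (1 + c) ≤ ∫ y, 1 / (1 + c * exp y) ∂ν := by
  have hjensen := convexOn_one_div_one_add.map_integral_le
    (continuousOn_const.div (by fun_prop) fun x (hx : 0 ≤ x) => by positivity) isClosed_Ici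
    (ae_of_all _ fun y => mem_Ici.mpr (by positivity)) (hint.const_mul c)
    (integrable_one_div_one_add_mul_exp hc)
  rwa [integral_const_mul, hmean, mul_one] at hjensen

theorem g_monotone (a l : ℝ) (ha : 0 < a) (hl : 0 < l)
    (g : ℝ → ℝ)
    (hg : ∀ s, g s = ∫ w, 1 / (1 + l * Real.exp w)
        ∂(gaussianReal (-(a*s)/2) (Real.toNNReal (a*s)))) :
    ∀ s' s : ℝ, 0 < s' → s' ≤ s → g s' ≤ g s := by
  intro s' s hs' hss
  have hv₁ : 0 ≤ a * s' := by positivity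
  have hv₂ : 0 ≤ a * (s - s') := mul_nonneg ha.le (sub_nonneg.mpr hss)
  set ν := gaussianReal (-(a * (s - s')) / 2) (a * (s - s')).toNNReal
  have hsplit : gaussianReal (-(a * s) / 2) (a * s).toNNReal
      = gaussianReal (-(a * s') / 2) (a * s').toNNReal ∗ ν := by
    rw [gaussianReal_conv_gaussianReal, ← toNNReal_add hv₁ hv₂]
    congr 1 <;> ring_nf
  -- the drift `-a/2` per unit time is exactly what makes `exp W` a martingale
  have hmean : ∫ y, exp y ∂ν = 1 := by
    rw [integral_exp_gaussianReal, coe_toNNReal _ hv₂, ← exp_zero]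
    ring_nf
  rw [hg, hg, hsplit]
  refine Measure.integral_le_integral_conv (integrable_one_div_one_add_mul_exp hl.le)
    (integrable_one_div_one_add_mul_exp hl.le) fun x => ?_
  simpa only [exp_add, mul_assoc] using
    one_div_one_add_le_integral_one_div_one_add_mul_exp
      (by simpa using integrable_exp_mul_gaussianReal 1) hmean (by positivity : 0 ≤ l * exp x)
end

section
/- Let π₁, π₂ > 0 with π₁ + π₂ = 1, a = 1/(π₁π₂²), and for s > 0 let W ~ N(−as/2, as). Define g(s) = π₁·E[1/(1 + π₂(e^W − 1))] − π₁. Then as s → 0⁺, g(s) = s + ((1 − 6π₁π₂)/(2π₁π₂²)) s² + ((1 − 24π₁π₂ + 90π₁²π₂²)/(6π₁²π₂⁴)) s³ + O(s⁴). -/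
/-!
Since `t ↦ e^{tw}` is an additive character, `(e^w - 1)^n` is its `n`-th forward difference at
`0`; hence, with `X = e^W - 1`, `E[X^n]` is the `n`-th forward difference at `0` of the moment
generating function `E[e^{tW}] = exp (a s · t(t-1)/2)`. Expanding `1/(1 + π₂ X)` geometrically
up to order `8`, the remainder is nonnegative and at most `π₂^8 E[X^8] / π₁`. Replacing each
`exp (a s · k(k-1)/2)` by its cubic Taylor polynomial costs `O(s^4)`; after this replacement the
eighth forward difference vanishes, because the Taylor polynomial has degree `6` in `k`, and the
lower ones add up to the stated cubic polynomial in `s`.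
-/

open MeasureTheory ProbabilityTheory Filter Topology Asymptotics
open Finset fwdDiff

section ForwardDifference

variable {α : Type*}

lemma fwdDiff_iter_exp_mul_apply_zero (w : ℝ) (n : ℕ) :
    (Δ_[1])^[n] (fun t : ℝ => Real.exp (t * w)) 0 = (Real.exp w - 1) ^ n := by
  let φ : AddChar ℝ ℝ :=
    ⟨fun t => Real.exp (t * w), by simp, fun s t => by rw [add_mul, Real.exp_add]⟩
  simpa [φ] using fwdDiff_addChar_eq φ 0 1 n

lemma integrable_fwdDiff_iter [MeasurableSpace α] {μ : Measure α} {F : ℝ → α → ℝ}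
    (hF : ∀ t, Integrable (F t) μ) (n : ℕ) (y h : ℝ) :
    Integrable (fun x => (Δ_[h])^[n] (fun t => F t x) y) μ := by
  simp_rw [fwdDiff_iter_eq_sum_shift, zsmul_eq_mul]
  exact integrable_finsetSum _ fun k _ => (hF _).const_mul _

lemma integral_fwdDiff_iter [MeasurableSpace α] {μ : Measure α} {F : ℝ → α → ℝ}
    (hF : ∀ t, Integrable (F t) μ) (n : ℕ) (y h : ℝ) :
    ∫ x, (Δ_[h])^[n] (fun t => F t x) y ∂μ = (Δ_[h])^[n] (fun t => ∫ x, F t x ∂μ) y := by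
  simp_rw [fwdDiff_iter_eq_sum_shift, zsmul_eq_mul]
  rw [integral_finsetSum _ fun k _ => (hF _).const_mul _]
  simp_rw [integral_const_mul]

lemma Asymptotics.IsBigO.fwdDiff_iter_sub {l : Filter α} {F G : α → ℝ → ℝ} {g : α → ℝ}
    (hFG : ∀ t, (fun x => F x t - G x t) =O[l] g) (n : ℕ) (y h : ℝ) :
    (fun x => (Δ_[h])^[n] (F x) y - (Δ_[h])^[n] (G x) y) =O[l] g := by
  simp_rw [fwdDiff_iter_eq_sum_shift, zsmul_eq_mul, ← sum_sub_distrib, ← mul_sub]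
  exact IsBigO.fun_sum fun k _ => (hFG _).const_mul_left _

end ForwardDifference

section ExponentialMoments

variable {μ : Measure ℝ}

lemma integrable_exp_sub_one_pow (hμ : ∀ t, Integrable (fun w => Real.exp (t * w)) μ) (n : ℕ) :
    Integrable (fun w => (Real.exp w - 1) ^ n) μ := by
  simp_rw [← fwdDiff_iter_exp_mul_apply_zero]
  exact integrable_fwdDiff_iter hμ n 0 1

lemma integral_exp_sub_one_pow (hμ : ∀ t, Integrable (fun w => Real.exp (t * w)) μ) (n : ℕ) :
    ∫ w, (Real.exp w - 1) ^ n ∂μ = (Δ_[1])^[n] (mgf id μ) 0 := by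
  simp_rw [← fwdDiff_iter_exp_mul_apply_zero]
  exact integral_fwdDiff_iter hμ n 0 1

lemma mgf_gaussianReal_neg_half {v : ℝ} (hv : 0 ≤ v) :
    mgf id (gaussianReal (-v / 2) v.toNNReal) = fun t => Real.exp (v * (t * (t - 1) / 2)) := by
  rw [mgf_id_gaussianReal, Real.coe_toNNReal _ hv]
  ext t
  ring_nf

end ExponentialMoments

lemma one_div_one_add_eq_geom_sum_add {K : Type*} [Field K] {y : K} (hy : 1 + y ≠ 0) (N : ℕ) :
    1 / (1 + y) = ∑ n ∈ range N, (-y) ^ n + (-y) ^ N / (1 + y) := by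
  have h := geom_sum_mul_neg (-y) N
  rw [sub_neg_eq_add] at h
  field_simp
  linear_combination -h

section GeometricExpansion

variable {p : ℝ}

lemma one_sub_le_one_add_mul_exp_sub_one (hp : 0 ≤ p) (w : ℝ) :
    1 - p ≤ 1 + p * (Real.exp w - 1) := by
  nlinarith [Real.exp_pos w]

lemma abs_pow_div_one_add_mul_exp_sub_one_le (hp0 : 0 ≤ p) (hp1 : p < 1) (N : ℕ) (w : ℝ) :
    |(-p * (Real.exp w - 1)) ^ N / (1 + p * (Real.exp w - 1))|
      ≤ p ^ N / (1 - p) * |(Real.exp w - 1) ^ N| := by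
  have hD := one_sub_le_one_add_mul_exp_sub_one hp0 w
  rw [abs_div, abs_of_pos (a := 1 + _) (by linarith), abs_pow, abs_mul, abs_neg,
    abs_of_nonneg hp0, mul_pow, abs_pow, div_mul_eq_mul_div]
  exact div_le_div_of_nonneg_left (by positivity) (by linarith) hD

variable {μ : Measure ℝ}

lemma integral_one_div_one_add_mul_exp_sub_one
    (hμ : ∀ t, Integrable (fun w => Real.exp (t * w)) μ) (hp0 : 0 ≤ p) (hp1 : p < 1) (N : ℕ) :
    ∫ w, 1 / (1 + p * (Real.exp w - 1)) ∂μ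
      = ∑ n ∈ range N, (-p) ^ n * (Δ_[1])^[n] (mgf id μ) 0
        + ∫ w, (-p * (Real.exp w - 1)) ^ N / (1 + p * (Real.exp w - 1)) ∂μ := by
  have hD (w : ℝ) : 1 + p * (Real.exp w - 1) ≠ 0 :=
    (by linarith [one_sub_le_one_add_mul_exp_sub_one hp0 w] : (0 : ℝ) < _).ne'
  have hpow (n : ℕ) : Integrable (fun w => (-p * (Real.exp w - 1)) ^ n) μ := by
    simp_rw [mul_pow]
    exact (integrable_exp_sub_one_pow hμ n).const_mul _
  have hrem : Integrable
      (fun w => (-p * (Real.exp w - 1)) ^ N / (1 + p * (Real.exp w - 1))) μ := by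
    refine Integrable.mono' (((integrable_exp_sub_one_pow hμ N).abs).const_mul (p ^ N / (1 - p)))
      ?_ (ae_of_all _ fun w => abs_pow_div_one_add_mul_exp_sub_one_le hp0 hp1 N w)
    exact (Continuous.div (by fun_prop) (by fun_prop) hD).aestronglyMeasurable
  simp_rw [one_div_one_add_eq_geom_sum_add (hD _) N, ← neg_mul]
  rw [integral_add (integrable_finsetSum _ fun n _ => hpow n) hrem,
    integral_finsetSum _ fun n _ => hpow n]
  simp_rw [mul_pow, integral_const_mul, integral_exp_sub_one_pow hμ]

lemma abs_integral_pow_div_one_add_mul_exp_sub_one_le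
    (hμ : ∀ t, Integrable (fun w => Real.exp (t * w)) μ) (hp0 : 0 ≤ p) (hp1 : p < 1) (m : ℕ) :
    |∫ w, (-p * (Real.exp w - 1)) ^ (2 * m) / (1 + p * (Real.exp w - 1)) ∂μ|
      ≤ p ^ (2 * m) / (1 - p) * (Δ_[1])^[2 * m] (mgf id μ) 0 := by
  rw [← integral_exp_sub_one_pow hμ, ← integral_const_mul]
  refine abs_integral_le_integral_abs.trans <| integral_mono_of_nonneg
    (ae_of_all _ fun w => abs_nonneg _) ((integrable_exp_sub_one_pow hμ _).const_mul _)
    (ae_of_all _ fun w => ?_)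
  simpa only [abs_of_nonneg ((even_two_mul m).pow_nonneg (Real.exp w - 1))] using
    abs_pow_div_one_add_mul_exp_sub_one_le hp0 hp1 (2 * m) w

end GeometricExpansion

section TaylorApproximation

noncomputable def expTaylor3 (x : ℝ) : ℝ := 1 + x + x ^ 2 / 2 + x ^ 3 / 6

lemma abs_exp_sub_expTaylor3_le {x : ℝ} (hx : |x| ≤ 1) :
    |Real.exp x - expTaylor3 x| ≤ |x| ^ 4 := by
  have h := Real.exp_bound hx (n := 4) (by norm_num)
  norm_num [sum_range_succ, Nat.factorial] at h
  rw [expTaylor3]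
  convert h.trans (mul_le_of_le_one_right (by positivity) (by norm_num)) using 3

lemma isBigO_exp_sub_expTaylor3 :
    (fun x => Real.exp x - expTaylor3 x) =O[𝓝 0] (fun x => x ^ 4) := by
  refine IsBigO.of_bound 1 ?_
  filter_upwards [Metric.closedBall_mem_nhds (0 : ℝ) one_pos] with x hx
  rw [Metric.mem_closedBall, dist_zero_right, Real.norm_eq_abs] at hx
  simpa [abs_pow] using abs_exp_sub_expTaylor3_le hx

noncomputable def mgfTaylor3 (v t : ℝ) : ℝ := expTaylor3 (v * (t * (t - 1) / 2))

lemma isBigO_fwdDiff_iter_exp_sub_mgfTaylor3 (c : ℝ) (n : ℕ) :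
    (fun s => (Δ_[1])^[n] (fun t => Real.exp (c * s * (t * (t - 1) / 2))) 0
        - (Δ_[1])^[n] (mgfTaylor3 (c * s)) 0) =O[𝓝 0] (fun s => s ^ 4) := by
  refine IsBigO.fwdDiff_iter_sub (fun t => ?_) n 0 1
  set q := t * (t - 1) / 2
  have hlim : Tendsto (fun s => c * s * q) (𝓝 0) (𝓝 0) :=
    (by fun_prop : Continuous fun s => c * s * q).tendsto' 0 0 (by simp)
  have hpow : (fun s => (c * s * q) ^ 4) =O[𝓝 0] (fun s : ℝ => s ^ 4) :=
    ((isBigO_refl (fun s : ℝ => s ^ 4) _).const_mul_left ((c * q) ^ 4)).congr_left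
      fun s => by ring
  exact (isBigO_exp_sub_expTaylor3.comp_tendsto hlim).trans hpow

lemma fwdDiff_iter_eight_mgfTaylor3 (v : ℝ) : (Δ_[1])^[2 * 4] (mgfTaylor3 v) 0 = 0 := by
  simp only [fwdDiff_iter_eq_sum_shift, sum_range_succ, sum_range_zero, mgfTaylor3, expTaylor3]
  norm_num [Nat.choose]
  ring

lemma sum_fwdDiff_iter_mgfTaylor3 {π₁ π₂ a : ℝ} (hπ₁ : π₁ ≠ 0) (hπ₂ : π₂ ≠ 0)
    (hsum : π₁ + π₂ = 1) (ha : a = 1 / (π₁ * π₂ ^ 2)) (s : ℝ) :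
    π₁ * ∑ n ∈ range (2 * 4), (-π₂) ^ n * (Δ_[1])^[n] (mgfTaylor3 (a * s)) 0 - π₁
      = s + ((1 - 6*π₁*π₂) / (2*π₁*π₂^2)) * s^2 +
        ((1 - 24*π₁*π₂ + 90*π₁^2*π₂^2) / (6*π₁^2*π₂^4)) * s^3 := by
  obtain rfl : π₁ = 1 - π₂ := by linarith
  subst ha
  simp only [fwdDiff_iter_eq_sum_shift, sum_range_succ, sum_range_zero, mgfTaylor3, expTaylor3]
  norm_num [Nat.choose]
  field_simp
  ring

end TaylorApproximation

lemma isBigO_integral_pow_div_one_add_mul_exp_sub_one {p c : ℝ} (hp0 : 0 ≤ p) (hp1 : p < 1)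
    (hc : 0 ≤ c) :
    (fun s => ∫ w, (-p * (Real.exp w - 1)) ^ (2 * 4) / (1 + p * (Real.exp w - 1))
        ∂(gaussianReal (-(c * s) / 2) (c * s).toNNReal)) =O[𝓝[>] 0] (fun s => s ^ 4) := by
  refine (IsBigO.of_bound (p ^ (2 * 4) / (1 - p)) ?_).trans
    ((isBigO_fwdDiff_iter_exp_sub_mgfTaylor3 c (2 * 4)).mono nhdsWithin_le_nhds)
  filter_upwards [self_mem_nhdsWithin] with s (hs : 0 < s)
  have h := abs_integral_pow_div_one_add_mul_exp_sub_one_le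
    (μ := gaussianReal (-(c * s) / 2) (c * s).toNNReal) integrable_exp_mul_gaussianReal hp0 hp1 4
  rw [mgf_gaussianReal_neg_half (mul_nonneg hc hs.le)] at h
  simp only [fwdDiff_iter_eight_mgfTaylor3, sub_zero, Real.norm_eq_abs]
  exact h.trans (mul_le_mul_of_nonneg_left (le_abs_self _)
    (div_nonneg (by positivity) (by linarith)))

theorem g_taylor_expansion (π₁ π₂ a : ℝ) (hπ₁ : 0 < π₁) (hπ₂ : 0 < π₂)
    (hsum : π₁ + π₂ = 1) (ha : a = 1 / (π₁ * π₂^2))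
    (g : ℝ → ℝ)
    (hg : ∀ s, g s = π₁ * (∫ w, 1 / (1 + π₂ * (Real.exp w - 1))
        ∂(gaussianReal (-(a*s)/2) (Real.toNNReal (a*s)))) - π₁) :
    (fun s => g s - (s + ((1 - 6*π₁*π₂) / (2*π₁*π₂^2)) * s^2 +
        ((1 - 24*π₁*π₂ + 90*π₁^2*π₂^2) / (6*π₁^2*π₂^4)) * s^3))
      =O[𝓝[>] (0:ℝ)] (fun s => s^4) := by
  have hπ₂1 : π₂ < 1 := by linarith
  have ha0 : 0 < a := by rw [ha]; positivity
  set R := fun s => ∫ w, (-π₂ * (Real.exp w - 1)) ^ (2 * 4) / (1 + π₂ * (Real.exp w - 1))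
    ∂(gaussianReal (-(a*s)/2) (Real.toNNReal (a*s)))
  set E := fun n s => (Δ_[1])^[n] (fun t => Real.exp (a * s * (t * (t - 1) / 2))) 0
    - (Δ_[1])^[n] (mgfTaylor3 (a * s)) 0
  have hE (n : ℕ) : E n =O[𝓝[>] 0] (fun s => s ^ 4) :=
    (isBigO_fwdDiff_iter_exp_sub_mgfTaylor3 a n).mono nhdsWithin_le_nhds
  have hR : R =O[𝓝[>] 0] (fun s => s ^ 4) :=
    isBigO_integral_pow_div_one_add_mul_exp_sub_one hπ₂.le hπ₂1 ha0.le
  have hsplit : ∀ᶠ s in 𝓝[>] 0,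
      π₁ * ∑ n ∈ range (2 * 4), (-π₂) ^ n * E n s + π₁ * R s
        = g s - (s + ((1 - 6*π₁*π₂) / (2*π₁*π₂^2)) * s^2 +
          ((1 - 24*π₁*π₂ + 90*π₁^2*π₂^2) / (6*π₁^2*π₂^4)) * s^3) := by
    filter_upwards [self_mem_nhdsWithin] with s (hs : 0 < s)
    rw [hg, ← sum_fwdDiff_iter_mgfTaylor3 hπ₁.ne' hπ₂.ne' hsum ha,
      integral_one_div_one_add_mul_exp_sub_one integrable_exp_mul_gaussianReal
        hπ₂.le hπ₂1 (2 * 4), mgf_gaussianReal_neg_half (mul_pos ha0 hs).le]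
    simp only [E, R, mul_sub, sum_sub_distrib]
    ring
  exact (((IsBigO.fun_sum fun n _ => (hE n).const_mul_left ((-π₂) ^ n)).const_mul_left π₁).add
    (hR.const_mul_left π₁)).congr' hsplit EventuallyEq.rfl
end

section
/- Let ε > 0, N a nonnegative integer, γ ∈ (0,1), δ > 0 with ε ≤ min(π₂γ^N, δγ), and let (x_n) be a sequence of nonnegative reals with x_n ≥ π₂γ^n for n ≤ N. Assume: (i) if x_n ≥ γ^{-1}ε then x_{n+1} ≥ γ x_n; (ii) if ε ≤ x_n ≤ γ^{-1}ε ≤ δ and n ≥ N then x_{n+1} ≥ x_n. Then x_n ≥ ε for all n ≥ 0. -/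
/-! The threshold `γ⁻¹ ε` splits each step: above it, (i) loses at most a factor `γ` and so
stays above `ε`; between `ε` and it, (ii) applies and `x` does not decrease. Up to `N` the
initial bound `π₂ γ ⁿ ≥ π₂ γ ^ N ≥ ε` does the job. -/

lemma le_of_threshold_step {γ ε a b : ℝ} (hγ : 0 < γ) (hi : γ⁻¹ * ε ≤ a → γ * a ≤ b)
    (hii : a ≤ γ⁻¹ * ε → a ≤ b) (ha : ε ≤ a) : ε ≤ b := by
  rcases le_or_gt (γ⁻¹ * ε) a with hbig | hsmall
  · calc ε = γ * (γ⁻¹ * ε) := (mul_inv_cancel_left₀ hγ.ne' ε).symm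
      _ ≤ γ * a := mul_le_mul_of_nonneg_left hbig hγ.le
      _ ≤ b := hi hbig
  · exact ha.trans (hii hsmall.le)

lemma le_mul_pow_of_le_mul_pow {c γ ε : ℝ} {n N : ℕ} (hc : 0 ≤ c) (hγ0 : 0 ≤ γ) (hγ1 : γ ≤ 1)
    (hn : n ≤ N) (hε : ε ≤ c * γ ^ N) : ε ≤ c * γ ^ n :=
  hε.trans (mul_le_mul_of_nonneg_left (pow_le_pow_of_le_one hγ0 hγ1 hn) hc)

theorem reconstruction_induction_general (π₂ γ δ ε : ℝ) (N : ℕ)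
    (hπ₂ : 0 < π₂) (hγ0 : 0 < γ) (hγ1 : γ < 1)
    (hεmin : ε ≤ min (π₂ * γ ^ N) (δ * γ))
    (x : ℕ → ℝ)
    (hinit : ∀ n ≤ N, π₂ * γ ^ n ≤ x n)
    (hi : ∀ n, γ⁻¹ * ε ≤ x n → γ * x n ≤ x (n + 1))
    (hii : ∀ n, N ≤ n → ε ≤ x n → x n ≤ γ⁻¹ * ε → γ⁻¹ * ε ≤ δ → x n ≤ x (n + 1)) :
    ∀ n, ε ≤ x n := by
  have hthreshold : γ⁻¹ * ε ≤ δ :=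
    (inv_mul_le_iff₀ hγ0).mpr (mul_comm δ γ ▸ hεmin.trans (min_le_right _ _))
  have hearly : ∀ n ≤ N, ε ≤ x n := fun n hn =>
    (le_mul_pow_of_le_mul_pow hπ₂.le hγ0.le hγ1.le hn (hεmin.trans (min_le_left _ _))).trans
      (hinit n hn)
  intro n
  rcases le_total n N with hn | hn
  · exact hearly n hn
  induction n, hn using Nat.le_induction with
  | base => exact hearly N le_rfl
  | succ n hNn ih => exact le_of_threshold_step hγ0 (hi n) (hii n hNn ih · hthreshold) ih

theorem reconstruction_induction (π₂ γ δ ε : ℝ) (N : ℕ)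
    (hπ₂ : 0 < π₂) (hγ0 : 0 < γ) (hγ1 : γ < 1) (hδ : 0 < δ) (hε : 0 < ε)
    (hεmin : ε ≤ min (π₂ * γ ^ N) (δ * γ))
    (x : ℕ → ℝ) (hx : ∀ n, 0 ≤ x n)
    (hinit : ∀ n ≤ N, π₂ * γ ^ n ≤ x n)
    (hi : ∀ n, γ⁻¹ * ε ≤ x n → γ * x n ≤ x (n + 1))
    (hii : ∀ n, N ≤ n → ε ≤ x n → x n ≤ γ⁻¹ * ε → γ⁻¹ * ε ≤ δ → x n ≤ x (n + 1)) :
    ∀ n, ε ≤ x n :=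
  reconstruction_induction_general π₂ γ δ ε N hπ₂ hγ0 hγ1 hεmin x hinit hi hii
end
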